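/- Let A and B be positive definite d×d complex matrices, and let Y₀ be a Hermitian d×d matrix such that [A^{-1/2} Y₀ A^{-1/2}, B] = 0 and [B A^{-1/2} Y₀, A^{-1/2}] + [Y₀ A^{-1/2} B, A^{-1/2}] = 0, where [X, Y] = XY − YX. Then [A^{-1/2} B A^{-1/2}, Y₀] = 0 and the matrix B^{1/2} A^{-1/2} Y₀ A^{-1/2} B^{1/2} commutes with both A and B. -/

import Mathlib

/-!
Write `S = A^{-1/2}` and `Z = S Y₀ S`. The identity
`⁅S B S, Y⁆ + ⁅S Y S, B⁆ + ⁅B S Y, S⁆ + ⁅Y S B, S⁆ = 0`, valid in any ring, turns the two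
hypotheses into `⁅S B S, Y₀⁆ = 0`. Conjugating this by `A^{1/2}` gives `B Z A = A Z B`. Since `Z`
commutes with `B`, it commutes with `B^{1/2}`, so `B^{1/2} Z B^{1/2} = B Z = Z B`, which therefore
commutes with `B` and, by the previous identity, with `A`.
-/

open Matrix
open scoped ComplexOrder

/-- The square root of a positive semidefinite matrix, as defined in Mathlib (Dec 2024),
where it was `Matrix.PosSemidef.sqrt`; it is no longer in Mathlib. -/
noncomputable def Matrix.PosSemidef.sqrt {n : Type*} [Fintype n] [DecidableEq n] {𝕜 : Type*}
    [RCLike 𝕜] {A : Matrix n n 𝕜} (hA : A.PosSemidef) : Matrix n n 𝕜 :=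
  hA.1.eigenvectorUnitary.1 * diagonal ((↑) ∘ (√·) ∘ hA.1.eigenvalues) *
    (star hA.1.eigenvectorUnitary : Matrix n n 𝕜)

namespace Matrix.PosSemidef

variable {n 𝕜 : Type*} [Fintype n] [DecidableEq n] [RCLike 𝕜] {A : Matrix n n 𝕜}

theorem sqrt_eq_cfc (hA : A.PosSemidef) : hA.sqrt = cfc Real.sqrt A := by
  rw [hA.1.cfc_eq, IsHermitian.cfc, Unitary.conjStarAlgAut_apply]
  rfl

open scoped MatrixOrder in
theorem sqrt_eq_cfcSqrt (hA : A.PosSemidef) : hA.sqrt = CFC.sqrt A := by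
  rw [sqrt_eq_cfc, CFC.sqrt_eq_real_sqrt A hA.nonneg, cfcₙ_eq_cfc]

open scoped MatrixOrder in
theorem sqrt_mul_self (hA : A.PosSemidef) : hA.sqrt * hA.sqrt = A := by
  rw [sqrt_eq_cfcSqrt]
  exact CFC.sqrt_mul_sqrt_self A hA.nonneg

theorem commute_sqrt (hA : A.PosSemidef) {Z : Matrix n n 𝕜} (h : Commute A Z) :
    Commute hA.sqrt Z := by
  rw [sqrt_eq_cfc]
  exact h.cfc_real _

end Matrix.PosSemidef

open scoped MatrixOrder in
theorem Matrix.PosDef.isUnit_sqrt {n 𝕜 : Type*} [Fintype n] [DecidableEq n] [RCLike 𝕜]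
    {A : Matrix n n 𝕜} (hA : A.PosDef) : IsUnit hA.posSemidef.sqrt := by
  rw [hA.posSemidef.sqrt_eq_cfcSqrt, CFC.isUnit_sqrt_iff A hA.posSemidef.nonneg]
  exact hA.isUnit

theorem lie_mul_mul_eq_zero_of_lie_eq_zero {M : Type*} [Ring M] {S B Y : M}
    (h1 : ⁅S * Y * S, B⁆ = 0) (h2 : ⁅B * S * Y, S⁆ + ⁅Y * S * B, S⁆ = 0) :
    ⁅S * B * S, Y⁆ = 0 :=
  calc ⁅S * B * S, Y⁆ = -(⁅B * S * Y, S⁆ + ⁅Y * S * B, S⁆) - ⁅S * Y * S, B⁆ := by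
        simp only [Ring.lie_def]
        noncomm_ring
    _ = 0 := by rw [h1, h2, neg_zero, sub_zero]

theorem mul_conj_mul_eq_mul_conj_mul_of_commute {M : Type*} [Monoid M] {R S B Y : M}
    (hRS : R * S = 1) (hSR : S * R = 1) (h : Commute (S * B * S) Y) :
    B * (S * Y * S) * (R * R) = R * R * (S * Y * S * B) := by
  have hRS' (X : M) : R * (S * X) = X := by rw [← mul_assoc, hRS, one_mul]
  have hSR' (X : M) : S * (R * X) = X := by rw [← mul_assoc, hSR, one_mul]
  calc B * (S * Y * S) * (R * R) = R * (S * B * S * Y) * R := by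
        simp only [mul_assoc, hRS', hSR']
    _ = R * (Y * (S * B * S)) * R := by rw [h.eq]
    _ = R * R * (S * Y * S * B) := by simp only [mul_assoc, hRS', hSR, mul_one]

theorem commutant_of_orthogonality_relations_general (d : ℕ) (A B : Matrix (Fin d) (Fin d) ℂ)
    (hA : A.PosDef) (hB : B.PosDef) (Y₀ : Matrix (Fin d) (Fin d) ℂ)
    (h1 : ((Matrix.PosSemidef.sqrt hA.posSemidef)⁻¹ * Y₀ * (Matrix.PosSemidef.sqrt hA.posSemidef)⁻¹) * B
        - B * ((Matrix.PosSemidef.sqrt hA.posSemidef)⁻¹ * Y₀ * (Matrix.PosSemidef.sqrt hA.posSemidef)⁻¹) = 0)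
    (h2 : ((B * (Matrix.PosSemidef.sqrt hA.posSemidef)⁻¹ * Y₀) * (Matrix.PosSemidef.sqrt hA.posSemidef)⁻¹
          - (Matrix.PosSemidef.sqrt hA.posSemidef)⁻¹ * (B * (Matrix.PosSemidef.sqrt hA.posSemidef)⁻¹ * Y₀))
        + ((Y₀ * (Matrix.PosSemidef.sqrt hA.posSemidef)⁻¹ * B) * (Matrix.PosSemidef.sqrt hA.posSemidef)⁻¹
          - (Matrix.PosSemidef.sqrt hA.posSemidef)⁻¹ * (Y₀ * (Matrix.PosSemidef.sqrt hA.posSemidef)⁻¹ * B)) = 0) :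
    ((Matrix.PosSemidef.sqrt hA.posSemidef)⁻¹ * B * (Matrix.PosSemidef.sqrt hA.posSemidef)⁻¹) * Y₀
        - Y₀ * ((Matrix.PosSemidef.sqrt hA.posSemidef)⁻¹ * B * (Matrix.PosSemidef.sqrt hA.posSemidef)⁻¹) = 0 ∧
    ((Matrix.PosSemidef.sqrt hB.posSemidef) * (Matrix.PosSemidef.sqrt hA.posSemidef)⁻¹ * Y₀ * (Matrix.PosSemidef.sqrt hA.posSemidef)⁻¹
        * (Matrix.PosSemidef.sqrt hB.posSemidef)) * A
      = A * ((Matrix.PosSemidef.sqrt hB.posSemidef) * (Matrix.PosSemidef.sqrt hA.posSemidef)⁻¹ * Y₀ * (Matrix.PosSemidef.sqrt hA.posSemidef)⁻¹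
        * (Matrix.PosSemidef.sqrt hB.posSemidef)) ∧
    ((Matrix.PosSemidef.sqrt hB.posSemidef) * (Matrix.PosSemidef.sqrt hA.posSemidef)⁻¹ * Y₀ * (Matrix.PosSemidef.sqrt hA.posSemidef)⁻¹
        * (Matrix.PosSemidef.sqrt hB.posSemidef)) * B
      = B * ((Matrix.PosSemidef.sqrt hB.posSemidef) * (Matrix.PosSemidef.sqrt hA.posSemidef)⁻¹ * Y₀ * (Matrix.PosSemidef.sqrt hA.posSemidef)⁻¹
        * (Matrix.PosSemidef.sqrt hB.posSemidef)) := by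
  set R := hA.posSemidef.sqrt
  set S := R⁻¹
  set T := hB.posSemidef.sqrt
  have hRR : R * R = A := hA.posSemidef.sqrt_mul_self
  have hTT : T * T = B := hB.posSemidef.sqrt_mul_self
  have hRdet : IsUnit R.det := (isUnit_iff_isUnit_det R).mp hA.isUnit_sqrt
  have hRS : R * S = 1 := R.mul_nonsing_inv hRdet
  have hSR : S * R = 1 := R.nonsing_inv_mul hRdet
  have hZB : Commute (S * Y₀ * S) B := sub_eq_zero.mp h1
  have hZT : Commute (S * Y₀ * S) T := (hB.posSemidef.commute_sqrt hZB.symm).symm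
  have hBY : ⁅S * B * S, Y₀⁆ = 0 :=
    lie_mul_mul_eq_zero_of_lie_eq_zero (by rwa [Ring.lie_def]) (by simpa only [Ring.lie_def])
  rw [Ring.lie_def] at hBY
  have hC : T * S * Y₀ * S * T = B * (S * Y₀ * S) := by
    rw [← hTT, mul_assoc T T, ← hZT.eq]
    simp only [mul_assoc]
  refine ⟨hBY, ?_, ?_⟩
  · rw [hC, ← hRR, mul_conj_mul_eq_mul_conj_mul_of_commute hRS hSR (sub_eq_zero.mp hBY), hZB.eq]
  · rw [hC, mul_assoc, hZB.eq, mul_assoc]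

/-- If `Y₀` is Hermitian with `[A^{-1/2} Y₀ A^{-1/2}, B] = 0` and
`[B A^{-1/2} Y₀, A^{-1/2}] + [Y₀ A^{-1/2} B, A^{-1/2}] = 0`, then
`[A^{-1/2} B A^{-1/2}, Y₀] = 0` and `B^{1/2} A^{-1/2} Y₀ A^{-1/2} B^{1/2}` commutes with
both `A` and `B`. -/
theorem commutant_of_orthogonality_relations (d : ℕ) (A B : Matrix (Fin d) (Fin d) ℂ)
    (hA : A.PosDef) (hB : B.PosDef) (Y₀ : Matrix (Fin d) (Fin d) ℂ) (hY₀ : Y₀.IsHermitian)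
    (h1 : ((Matrix.PosSemidef.sqrt hA.posSemidef)⁻¹ * Y₀ * (Matrix.PosSemidef.sqrt hA.posSemidef)⁻¹) * B
        - B * ((Matrix.PosSemidef.sqrt hA.posSemidef)⁻¹ * Y₀ * (Matrix.PosSemidef.sqrt hA.posSemidef)⁻¹) = 0)
    (h2 : ((B * (Matrix.PosSemidef.sqrt hA.posSemidef)⁻¹ * Y₀) * (Matrix.PosSemidef.sqrt hA.posSemidef)⁻¹
          - (Matrix.PosSemidef.sqrt hA.posSemidef)⁻¹ * (B * (Matrix.PosSemidef.sqrt hA.posSemidef)⁻¹ * Y₀))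
        + ((Y₀ * (Matrix.PosSemidef.sqrt hA.posSemidef)⁻¹ * B) * (Matrix.PosSemidef.sqrt hA.posSemidef)⁻¹
          - (Matrix.PosSemidef.sqrt hA.posSemidef)⁻¹ * (Y₀ * (Matrix.PosSemidef.sqrt hA.posSemidef)⁻¹ * B)) = 0) :
    ((Matrix.PosSemidef.sqrt hA.posSemidef)⁻¹ * B * (Matrix.PosSemidef.sqrt hA.posSemidef)⁻¹) * Y₀
        - Y₀ * ((Matrix.PosSemidef.sqrt hA.posSemidef)⁻¹ * B * (Matrix.PosSemidef.sqrt hA.posSemidef)⁻¹) = 0 ∧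
    ((Matrix.PosSemidef.sqrt hB.posSemidef) * (Matrix.PosSemidef.sqrt hA.posSemidef)⁻¹ * Y₀ * (Matrix.PosSemidef.sqrt hA.posSemidef)⁻¹
        * (Matrix.PosSemidef.sqrt hB.posSemidef)) * A
      = A * ((Matrix.PosSemidef.sqrt hB.posSemidef) * (Matrix.PosSemidef.sqrt hA.posSemidef)⁻¹ * Y₀ * (Matrix.PosSemidef.sqrt hA.posSemidef)⁻¹
        * (Matrix.PosSemidef.sqrt hB.posSemidef)) ∧
    ((Matrix.PosSemidef.sqrt hB.posSemidef) * (Matrix.PosSemidef.sqrt hA.posSemidef)⁻¹ * Y₀ * (Matrix.PosSemidef.sqrt hA.posSemidef)⁻¹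
        * (Matrix.PosSemidef.sqrt hB.posSemidef)) * B
      = B * ((Matrix.PosSemidef.sqrt hB.posSemidef) * (Matrix.PosSemidef.sqrt hA.posSemidef)⁻¹ * Y₀ * (Matrix.PosSemidef.sqrt hA.posSemidef)⁻¹
        * (Matrix.PosSemidef.sqrt hB.posSemidef)) :=
  commutant_of_orthogonality_relations_general d A B hA hB Y₀ h1 h2
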